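/- Let R : ℝⁿ → ℝⁿ and J : ℝⁿ → ℝ be twice continuously differentiable, and suppose R(u) = 0 with the Jacobian DR(u₀) invertible at a point u₀ near u. If z solves the discrete dual equation DR(u₀)ᵀ z = DJ(u₀)ᵀ, then J(u) = J(u₀) - zᵀ R(u₀) + O(‖u - u₀‖²). -/

import Mathlib

/-!
Both `R` and `J` agree with their linearizations at `u₀` up to `O(‖u - u₀‖²)`, since their
derivatives are locally Lipschitz. The dual equation turns the linearized residual
`⟪z, DR(u₀)(u - u₀)⟫` into the linearized error `DJ(u₀)(u - u₀)`, so the two linearizations cancel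
and `J u - J u₀ + ⟪z, R u₀⟫ - ⟪z, R u⟫` is quadratic in `u - u₀`; at a zero `u` of `R` the last
term vanishes.
-/

open Asymptotics Metric Set Topology NNReal RealInnerProductSpace

section

variable {E F : Type*} [NormedAddCommGroup E] [NormedSpace ℝ E]
  [NormedAddCommGroup F] [NormedSpace ℝ F]

theorem LipschitzOnWith.norm_sub_sub_fderiv_le {f : E → F} {f' : E → E →L[ℝ] F} {s : Set E}
    {K : ℝ≥0} {x₀ x : E} (hf' : LipschitzOnWith K f' s)
    (hf : ∀ y ∈ s, HasFDerivWithinAt f (f' y) s y) (hs : Convex ℝ s) (hx₀ : x₀ ∈ s)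
    (hx : x ∈ s) : ‖f x - f x₀ - f' x₀ (x - x₀)‖ ≤ K * ‖x - x₀‖ ^ 2 := by
  set t := s ∩ closedBall x₀ ‖x - x₀‖
  have hg : ∀ y ∈ t, HasFDerivWithinAt (fun w ↦ f w - f' x₀ w) (f' y - f' x₀) t y :=
    fun y hy ↦ ((hf y hy.1).mono inter_subset_left).sub (f' x₀).hasFDerivWithinAt
  have hg' : ∀ y ∈ t, ‖f' y - f' x₀‖ ≤ K * ‖x - x₀‖ := fun y hy ↦
    (hf'.norm_sub_le hy.1 hx₀).trans <|
      mul_le_mul_of_nonneg_left (mem_closedBall_iff_norm.1 hy.2) K.2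
  have hmvt := (hs.inter (convex_closedBall _ _)).norm_image_sub_le_of_norm_hasFDerivWithin_le
    hg hg' ⟨hx₀, mem_closedBall_self (norm_nonneg _)⟩ ⟨hx, mem_closedBall_iff_norm.2 le_rfl⟩
  calc ‖f x - f x₀ - f' x₀ (x - x₀)‖ = ‖f x - f' x₀ x - (f x₀ - f' x₀ x₀)‖ := by
        rw [map_sub, sub_sub_sub_comm, sub_sub]
    _ ≤ K * ‖x - x₀‖ * ‖x - x₀‖ := hmvt
    _ = K * ‖x - x₀‖ ^ 2 := by ring

theorem ContDiffAt.isBigO_sub_sub_fderiv {f : E → F} {x₀ : E} (hf : ContDiffAt ℝ 2 f x₀) :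
    (fun x ↦ f x - f x₀ - fderiv ℝ f x₀ (x - x₀)) =O[𝓝 x₀] fun x ↦ ‖x - x₀‖ ^ 2 := by
  obtain ⟨K, t, ht, hK⟩ := (hf.fderiv_right (m := 1) le_rfl).exists_lipschitzOnWith
  have hdiff : ∀ᶠ y in 𝓝 x₀, DifferentiableAt ℝ f y :=
    (hf.eventually (by simp)).mono fun y hy ↦ hy.differentiableAt (by simp)
  obtain ⟨ε, hε, hball⟩ := Metric.mem_nhds_iff.1 (Filter.inter_mem ht hdiff)
  refine IsBigO.of_bound K ?_
  filter_upwards [ball_mem_nhds x₀ hε] with x hx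
  rw [norm_pow, norm_norm]
  exact (hK.mono fun y hy ↦ (hball hy).1).norm_sub_sub_fderiv_le
    (fun y hy ↦ (hball hy).2.hasFDerivAt.hasFDerivWithinAt) (convex_ball x₀ ε)
    (mem_ball_self hε) hx

theorem isBigO_dwr_remainder {G : Type*} [NormedAddCommGroup G] [InnerProductSpace ℝ G]
    {R : E → G} {J : E → ℝ} {u₀ : E} (hR : ContDiffAt ℝ 2 R u₀) (hJ : ContDiffAt ℝ 2 J u₀)
    {z : G} (hz : ∀ v, ⟪z, fderiv ℝ R u₀ v⟫ = fderiv ℝ J u₀ v) :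
    (fun u ↦ J u - (J u₀ - ⟪z, R u₀⟫) - ⟪z, R u⟫) =O[𝓝 u₀] fun u ↦ ‖u - u₀‖ ^ 2 := by
  have hzR := ((innerSL ℝ z).isBigO_comp _ _).trans hR.isBigO_sub_sub_fderiv
  refine (hJ.isBigO_sub_sub_fderiv.sub hzR).congr_left fun u ↦ ?_
  simp only [innerSL_apply_apply, inner_sub_right, hz]
  ring

end

theorem dwr_error_representation_general {n : ℕ}
    (R : EuclideanSpace ℝ (Fin n) → EuclideanSpace ℝ (Fin n))
    (J : EuclideanSpace ℝ (Fin n) → ℝ)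
    (hR : ContDiff ℝ 2 R) (hJ : ContDiff ℝ 2 J)
    (u₀ : EuclideanSpace ℝ (Fin n))
    (z : EuclideanSpace ℝ (Fin n))
    (hz : ∀ v, ⟪z, fderiv ℝ R u₀ v⟫ = fderiv ℝ J u₀ v) :
    ∃ C δ : ℝ, 0 < C ∧ 0 < δ ∧ ∀ u, ‖u - u₀‖ < δ → R u = 0 →
      |J u - (J u₀ - ⟪z, R u₀⟫)| ≤ C * ‖u - u₀‖ ^ 2 := by
  obtain ⟨C, hC, hO⟩ := (isBigO_dwr_remainder hR.contDiffAt hJ.contDiffAt hz).exists_pos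
  obtain ⟨δ, hδ, hbound⟩ := Metric.eventually_nhds_iff.1 hO.bound
  refine ⟨C, δ, hC, hδ, fun u hu hRu ↦ ?_⟩
  have h := hbound (by rwa [dist_eq_norm])
  rwa [hRu, inner_zero_right, sub_zero, Real.norm_eq_abs, norm_pow, norm_norm] at h

/-- Dual-weighted residual error representation: if `R(u) = 0`, `DR(u₀)` is invertible,
and `z` solves the discrete dual equation `DR(u₀)ᵀ z = DJ(u₀)ᵀ`, then
`J(u) = J(u₀) - zᵀ R(u₀) + O(‖u - u₀‖²)`. -/
theorem dwr_error_representation {n : ℕ}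
    (R : EuclideanSpace ℝ (Fin n) → EuclideanSpace ℝ (Fin n))
    (J : EuclideanSpace ℝ (Fin n) → ℝ)
    (hR : ContDiff ℝ 2 R) (hJ : ContDiff ℝ 2 J)
    (u₀ : EuclideanSpace ℝ (Fin n))
    (hinv : ∃ A : EuclideanSpace ℝ (Fin n) ≃L[ℝ] EuclideanSpace ℝ (Fin n),
      (A : EuclideanSpace ℝ (Fin n) →L[ℝ] EuclideanSpace ℝ (Fin n)) = fderiv ℝ R u₀)
    (z : EuclideanSpace ℝ (Fin n))
    (hz : ∀ v, ⟪z, fderiv ℝ R u₀ v⟫ = fderiv ℝ J u₀ v) :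
    ∃ C δ : ℝ, 0 < C ∧ 0 < δ ∧ ∀ u, ‖u - u₀‖ < δ → R u = 0 →
      |J u - (J u₀ - ⟪z, R u₀⟫)| ≤ C * ‖u - u₀‖ ^ 2 :=
  dwr_error_representation_general R J hR hJ u₀ z hz
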